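/- arXiv:1604.06370 — 5 statements merged into one kernel-verified Lean document; each statement's English description precedes it below -/
import Mathlib

section
/- Let (A_n,B_n)_{n≥1} be an i.i.d. sequence of random vectors in ℝ² with E[|A_1|^δ]<1 and E[|B_1|^δ]<∞ for some δ∈(0,1), and let X_0^u := u and X_n^u := A_n X_{n−1}^u + B_n for n≥1. If A_1 > 0 almost surely and B_1/A_1 is unbounded from below (i.e. P(B_1/A_1 < −c) > 0 for every c>0), then almost surely there exists n≥1 with X_n^u < 0, for every initial value u∈ℝ. -/
open MeasureTheory ProbabilityTheory Filter Real Set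
open scoped ENNReal Topology

/-!
Write `ρ = E|A|^δ < 1`. Since `|x + y|^δ ≤ |x|^δ + |y|^δ`, independence gives
`E|X_n|^δ ≤ ρ^n |u|^δ + E|B|^δ / (1 - ρ)` for the chain started at `u` at any time, so by Markov's
inequality the chain is rarely large. Cut time into blocks of length `n₀ + 1`. As `A > 0`, the
chain is monotone in its initial value: if it is at most `M` at the start of a block, it stays
below the chain restarted there from `M`, which (for `n₀` large in terms of `M`) is below a fixed
level `M₀` after `n₀` steps with probability at least `1/2`; one step with `B/A < -M₀` then sends
it below `0`. These block events are independent, each of probability at least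
`γ = P(B/A < -M₀) / 2 > 0`, so the chain stays nonnegative with probability at most
`k · P(chain > M at a block start) + (1 - γ)^k`. Let `M → ∞`, then `k → ∞`.
-/

namespace RandomAffine

def affineIter (u : ℝ) (v : ℕ → ℝ × ℝ) : ℕ → ℝ
  | 0 => u
  | n + 1 => (v n).1 * affineIter u v n + (v n).2

lemma affineIter_add (u : ℝ) (v : ℕ → ℝ × ℝ) (m : ℕ) :
    ∀ n, affineIter u v (m + n) = affineIter (affineIter u v m) (fun i => v (m + i)) n
  | 0 => rfl
  | n + 1 => by rw [← add_assoc]; simp only [affineIter, affineIter_add u v m n]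

lemma monotone_affineIter {v : ℕ → ℝ × ℝ} (hv : ∀ i, 0 ≤ (v i).1) :
    ∀ n, Monotone fun u => affineIter u v n
  | 0 => fun _ _ h => h
  | n + 1 => fun _ _ h => by
    simp only [affineIter]
    gcongr
    · exact hv n
    · exact monotone_affineIter hv n h

def jumpSet (c : ℝ) : Set (ℝ × ℝ) := {q | 0 < q.1 ∧ q.2 / q.1 < -c}

lemma measurableSet_jumpSet (c : ℝ) : MeasurableSet (jumpSet c) :=
  (measurableSet_lt measurable_const measurable_fst).inter
    (measurableSet_lt (measurable_snd.div measurable_fst) measurable_const)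

lemma mul_add_neg_of_mem_jumpSet {c x : ℝ} {q : ℝ × ℝ} (hq : q ∈ jumpSet c) (hx : x ≤ c) :
    q.1 * x + q.2 < 0 := by
  obtain ⟨hpos, hlt⟩ := hq
  rw [div_lt_iff₀ hpos] at hlt
  nlinarith

lemma affineIter_neg_of_restart {u M c : ℝ} {v : ℕ → ℝ × ℝ} (hv : ∀ i, 0 < (v i).1)
    {s n : ℕ} (hs : affineIter u v s ≤ M) (hY : affineIter M (fun i => v (s + i)) n ≤ c)
    (hjump : v (s + n) ∈ jumpSet c) : affineIter u v (s + n + 1) < 0 := by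
  refine mul_add_neg_of_mem_jumpSet hjump ?_
  rw [affineIter_add]
  exact (monotone_affineIter (fun i => (hv (s + i)).le) n hs).trans hY

section SigmaOn

variable {Ω ι β : Type*} [mβ : MeasurableSpace β] {Z : ι → Ω → β} {S T : Set ι}

abbrev sigmaOn (Z : ι → Ω → β) (S : Set ι) : MeasurableSpace Ω :=
  ⨆ i ∈ S, mβ.comap (Z i)

lemma measurable_sigmaOn {i : ι} (hi : i ∈ S) : Measurable[sigmaOn Z S] (Z i) :=
  Measurable.of_comap_le (le_iSup₂ (f := fun i (_ : i ∈ S) => mβ.comap (Z i)) i hi)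

lemma sigmaOn_mono (h : S ⊆ T) : sigmaOn Z S ≤ sigmaOn Z T :=
  biSup_mono h

variable [mΩ : MeasurableSpace Ω] {μ : Measure Ω}

lemma sigmaOn_le (hZ : ∀ i, Measurable (Z i)) : sigmaOn Z S ≤ mΩ :=
  iSup₂_le fun i _ => (hZ i).comap_le

lemma indep_sigmaOn_of_disjoint (hZ : ∀ i, Measurable (Z i)) (hind : iIndepFun Z μ)
    (hST : Disjoint S T) : Indep (sigmaOn Z S) (sigmaOn Z T) μ :=
  indep_iSup_of_disjoint (fun i => (hZ i).comap_le) ((iIndepFun_iff_iIndep _ _ _).1 hind) hST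

lemma measure_inter_eq_mul_of_disjoint (hZ : ∀ i, Measurable (Z i)) (hind : iIndepFun Z μ)
    (hST : Disjoint S T) {C D : Set Ω} (hC : MeasurableSet[sigmaOn Z S] C)
    (hD : MeasurableSet[sigmaOn Z T] D) : μ (C ∩ D) = μ C * μ D :=
  (Indep_iff _ _ _).1 (indep_sigmaOn_of_disjoint hZ hind hST) C D hC hD

lemma indepFun_of_disjoint {γ γ' : Type*} [MeasurableSpace γ] [MeasurableSpace γ']
    (hZ : ∀ i, Measurable (Z i)) (hind : iIndepFun Z μ) (hST : Disjoint S T)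
    {f : Ω → γ} {g : Ω → γ'} (hf : Measurable[sigmaOn Z S] f) (hg : Measurable[sigmaOn Z T] g) :
    IndepFun f g μ :=
  (IndepFun_iff_Indep _ _ _).2 <| indep_of_indep_of_le_right
    (indep_of_indep_of_le_left (indep_sigmaOn_of_disjoint hZ hind hST) hf.comap_le) hg.comap_le

end SigmaOn

section Blocks

variable {Ω β : Type*} [MeasurableSpace Ω] [MeasurableSpace β] {μ : Measure Ω}
  [IsProbabilityMeasure μ]

lemma measure_biInter_compl_le {Z : ℕ → Ω → β} (hZ : ∀ i, Measurable (Z i))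
    (hind : iIndepFun Z μ) {L : ℕ} {F : ℕ → Set Ω} {γ : ℝ≥0∞}
    (hF : ∀ j, MeasurableSet[sigmaOn Z (Ico (j * L) (j * L + L))] (F j))
    (hγ : ∀ j, γ ≤ μ (F j)) (k : ℕ) :
    μ (⋂ j ∈ Finset.range k, (F j)ᶜ) ≤ (1 - γ) ^ k := by
  suffices h : MeasurableSet[sigmaOn Z (Iio (k * L))] (⋂ j ∈ Finset.range k, (F j)ᶜ) ∧
      μ (⋂ j ∈ Finset.range k, (F j)ᶜ) ≤ (1 - γ) ^ k from h.2
  induction k with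
  | zero => simp
  | succ k ih =>
    rw [Finset.range_add_one, Finset.set_biInter_insert, inter_comm, add_one_mul]
    have hFk : MeasurableSet[sigmaOn Z (Ico (k * L) (k * L + L))] (F k)ᶜ := (hF k).compl
    refine ⟨(sigmaOn_mono (Iio_subset_Iio le_self_add) _ ih.1).inter
      (sigmaOn_mono (fun i hi => hi.2) _ hFk), ?_⟩
    rw [measure_inter_eq_mul_of_disjoint hZ hind (Iio_disjoint_Ici le_rfl |>.mono_right
      Ico_subset_Ici_self) ih.1 hFk, prob_compl_eq_one_sub (sigmaOn_le hZ _ (hF k)), pow_succ]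
    exact mul_le_mul' ih.2 (tsub_le_tsub_left (hγ k) 1)

end Blocks

section Moments

variable {Ω : Type*} [MeasurableSpace Ω] {μ : Measure Ω} {δ : ℝ}

lemma abs_mul_add_rpow_le (hδ0 : 0 ≤ δ) (hδ1 : δ ≤ 1) (a x b : ℝ) :
    |a * x + b| ^ δ ≤ |a| ^ δ * |x| ^ δ + |b| ^ δ :=
  calc |a * x + b| ^ δ ≤ (|a * x| + |b|) ^ δ := rpow_le_rpow (abs_nonneg _) (abs_add_le _ _) hδ0
    _ ≤ |a * x| ^ δ + |b| ^ δ := rpow_add_le_add_rpow (abs_nonneg _) (abs_nonneg _) hδ0 hδ1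
    _ = |a| ^ δ * |x| ^ δ + |b| ^ δ := by rw [abs_mul, mul_rpow (abs_nonneg _) (abs_nonneg _)]

lemma le_pow_mul_add_div_of_le_mul_add {e : ℕ → ℝ} {ρ β : ℝ} (hρ0 : 0 ≤ ρ) (hρ1 : ρ < 1)
    (hβ : 0 ≤ β) (he : ∀ n, e (n + 1) ≤ ρ * e n + β) :
    ∀ n, e n ≤ ρ ^ n * e 0 + β / (1 - ρ)
  | 0 => by simpa using div_nonneg hβ (sub_nonneg.2 hρ1.le)
  | n + 1 => by
    have key : ρ * (β / (1 - ρ)) + β = β / (1 - ρ) := by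
      field_simp [(sub_pos.2 hρ1).ne']
      ring
    calc e (n + 1) ≤ ρ * (ρ ^ n * e 0 + β / (1 - ρ)) + β :=
          (he n).trans (by gcongr; exact le_pow_mul_add_div_of_le_mul_add hρ0 hρ1 hβ he n)
      _ = ρ ^ (n + 1) * e 0 + β / (1 - ρ) := by linear_combination key

variable {Y : Ω → ℝ} {W : Ω → ℝ × ℝ}

lemma integrable_rpow_abs_mul_add (hY : Measurable Y) (hW : Measurable W)
    (hind : IndepFun Y W μ) (hδ0 : 0 ≤ δ) (hδ1 : δ ≤ 1)
    (hYi : Integrable (fun ω => |Y ω| ^ δ) μ) (hA : Integrable (fun ω => |(W ω).1| ^ δ) μ)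
    (hB : Integrable (fun ω => |(W ω).2| ^ δ) μ) :
    Integrable (fun ω => |(W ω).1 * Y ω + (W ω).2| ^ δ) μ := by
  have hprod : Integrable (fun ω => |(W ω).1| ^ δ * |Y ω| ^ δ) μ :=
    (hind.symm.comp (by fun_prop : Measurable fun q : ℝ × ℝ => |q.1| ^ δ)
      (by fun_prop : Measurable fun y : ℝ => |y| ^ δ)).integrable_mul hA hYi
  refine (hprod.add hB).mono' (by fun_prop) (ae_of_all _ fun ω => ?_)
  rw [Real.norm_of_nonneg (by positivity)]
  exact abs_mul_add_rpow_le hδ0 hδ1 _ _ _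

lemma integral_rpow_abs_mul_add_le (hY : Measurable Y) (hW : Measurable W)
    (hind : IndepFun Y W μ) (hδ0 : 0 ≤ δ) (hδ1 : δ ≤ 1)
    (hYi : Integrable (fun ω => |Y ω| ^ δ) μ) (hA : Integrable (fun ω => |(W ω).1| ^ δ) μ)
    (hB : Integrable (fun ω => |(W ω).2| ^ δ) μ) :
    ∫ ω, |(W ω).1 * Y ω + (W ω).2| ^ δ ∂μ ≤
      (∫ ω, |(W ω).1| ^ δ ∂μ) * (∫ ω, |Y ω| ^ δ ∂μ) + ∫ ω, |(W ω).2| ^ δ ∂μ := by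
  have hind' : IndepFun (fun ω => |(W ω).1| ^ δ) (fun ω => |Y ω| ^ δ) μ :=
    hind.symm.comp (by fun_prop : Measurable fun q : ℝ × ℝ => |q.1| ^ δ)
      (by fun_prop : Measurable fun y : ℝ => |y| ^ δ)
  have hprod : Integrable (fun ω => |(W ω).1| ^ δ * |Y ω| ^ δ) μ := hind'.integrable_mul hA hYi
  calc ∫ ω, |(W ω).1 * Y ω + (W ω).2| ^ δ ∂μ
      ≤ ∫ ω, (|(W ω).1| ^ δ * |Y ω| ^ δ + |(W ω).2| ^ δ) ∂μ :=
        integral_mono (integrable_rpow_abs_mul_add hY hW hind hδ0 hδ1 hYi hA hB) (hprod.add hB)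
          fun ω => abs_mul_add_rpow_le hδ0 hδ1 _ _ _
    _ = _ := by
        rw [integral_add hprod hB, hind'.integral_fun_mul_eq_mul_integral (by fun_prop)
          (by fun_prop)]

lemma measure_lt_le_integral_rpow_abs_div [IsFiniteMeasure μ] (hδ : 0 < δ) {t : ℝ} (ht : 0 < t)
    (hY : Integrable (fun ω => |Y ω| ^ δ) μ) :
    μ {ω | t < Y ω} ≤ ENNReal.ofReal ((∫ ω, |Y ω| ^ δ ∂μ) / t ^ δ) :=
  calc μ {ω | t < Y ω} ≤ μ {ω | t ^ δ ≤ |Y ω| ^ δ} :=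
        measure_mono fun ω h => rpow_le_rpow ht.le ((le_of_lt h).trans (le_abs_self _)) hδ.le
    _ = ENNReal.ofReal (μ.real {ω | t ^ δ ≤ |Y ω| ^ δ}) := (ofReal_measureReal).symm
    _ ≤ _ := ENNReal.ofReal_le_ofReal <| by
        rw [le_div_iff₀ (rpow_pos_of_pos ht δ), mul_comm]
        exact mul_meas_ge_le_integral_of_nonneg (ae_of_all _ fun ω => by positivity) hY _

end Moments

section IID

variable {Ω : Type*} {Z : ℕ → Ω → ℝ × ℝ}

lemma measurable_affineIter_sigmaOn (u : ℝ) (m : ℕ) :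
    ∀ n, Measurable[sigmaOn Z (Ico m (m + n))] fun ω => affineIter u (fun i => Z (m + i) ω) n
  | 0 => measurable_const
  | n + 1 => by
    have hZ : Measurable[sigmaOn Z (Ico m (m + (n + 1)))] (Z (m + n)) :=
      measurable_sigmaOn (by simp)
    have hY := (measurable_affineIter_sigmaOn u m n).mono
      (sigmaOn_mono (Ico_subset_Ico_right (by omega : m + n ≤ m + (n + 1)))) le_rfl
    exact (hZ.fst.mul hY).add hZ.snd

variable [MeasurableSpace Ω] {μ : Measure Ω} {δ : ℝ}

lemma measurable_affineIter (hZ : ∀ i, Measurable (Z i)) (u : ℝ) (m n : ℕ) :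
    Measurable fun ω => affineIter u (fun i => Z (m + i) ω) n :=
  (measurable_affineIter_sigmaOn u m n).mono (sigmaOn_le hZ) le_rfl

lemma indepFun_affineIter (hZ : ∀ i, Measurable (Z i)) (hind : iIndepFun Z μ) (u : ℝ)
    (m n : ℕ) : IndepFun (fun ω => affineIter u (fun i => Z (m + i) ω) n) (Z (m + n)) μ :=
  indepFun_of_disjoint hZ hind (by simp) (measurable_affineIter_sigmaOn u m n)
    (measurable_sigmaOn (mem_singleton (m + n)))

lemma identDistrib_rpow_abs_fst (hident : ∀ i, IdentDistrib (Z i) (Z 0) μ μ) (i : ℕ) :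
    IdentDistrib (fun ω => |(Z i ω).1| ^ δ) (fun ω => |(Z 0 ω).1| ^ δ) μ μ :=
  (hident i).comp (by fun_prop : Measurable fun q : ℝ × ℝ => |q.1| ^ δ)

lemma identDistrib_rpow_abs_snd (hident : ∀ i, IdentDistrib (Z i) (Z 0) μ μ) (i : ℕ) :
    IdentDistrib (fun ω => |(Z i ω).2| ^ δ) (fun ω => |(Z 0 ω).2| ^ δ) μ μ :=
  (hident i).comp (by fun_prop : Measurable fun q : ℝ × ℝ => |q.2| ^ δ)

variable [IsProbabilityMeasure μ]

lemma integrable_rpow_abs_affineIter (hZ : ∀ i, Measurable (Z i)) (hind : iIndepFun Z μ)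
    (hident : ∀ i, IdentDistrib (Z i) (Z 0) μ μ) (hδ0 : 0 ≤ δ) (hδ1 : δ ≤ 1)
    (hA : Integrable (fun ω => |(Z 0 ω).1| ^ δ) μ) (hB : Integrable (fun ω => |(Z 0 ω).2| ^ δ) μ)
    (u : ℝ) (m : ℕ) :
    ∀ n, Integrable (fun ω => |affineIter u (fun i => Z (m + i) ω) n| ^ δ) μ
  | 0 => by simp [affineIter]
  | n + 1 =>
    integrable_rpow_abs_mul_add (measurable_affineIter hZ u m n) (hZ (m + n))
      (indepFun_affineIter hZ hind u m n) hδ0 hδ1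
      (integrable_rpow_abs_affineIter hZ hind hident hδ0 hδ1 hA hB u m n)
      ((identDistrib_rpow_abs_fst hident (m + n)).integrable_iff.2 hA)
      ((identDistrib_rpow_abs_snd hident (m + n)).integrable_iff.2 hB)

lemma integral_rpow_abs_affineIter_le (hZ : ∀ i, Measurable (Z i)) (hind : iIndepFun Z μ)
    (hident : ∀ i, IdentDistrib (Z i) (Z 0) μ μ) (hδ0 : 0 ≤ δ) (hδ1 : δ ≤ 1)
    (hA : Integrable (fun ω => |(Z 0 ω).1| ^ δ) μ) (hB : Integrable (fun ω => |(Z 0 ω).2| ^ δ) μ)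
    (hρ : ∫ ω, |(Z 0 ω).1| ^ δ ∂μ < 1) (u : ℝ) (m n : ℕ) :
    ∫ ω, |affineIter u (fun i => Z (m + i) ω) n| ^ δ ∂μ ≤
      (∫ ω, |(Z 0 ω).1| ^ δ ∂μ) ^ n * |u| ^ δ +
        (∫ ω, |(Z 0 ω).2| ^ δ ∂μ) / (1 - ∫ ω, |(Z 0 ω).1| ^ δ ∂μ) := by
  have hstep (n : ℕ) :
      ∫ ω, |affineIter u (fun i => Z (m + i) ω) (n + 1)| ^ δ ∂μ ≤
        (∫ ω, |(Z 0 ω).1| ^ δ ∂μ) * (∫ ω, |affineIter u (fun i => Z (m + i) ω) n| ^ δ ∂μ) +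
          ∫ ω, |(Z 0 ω).2| ^ δ ∂μ := by
    rw [← (identDistrib_rpow_abs_fst hident (m + n)).integral_eq,
      ← (identDistrib_rpow_abs_snd hident (m + n)).integral_eq]
    exact integral_rpow_abs_mul_add_le (measurable_affineIter hZ u m n) (hZ (m + n))
      (indepFun_affineIter hZ hind u m n) hδ0 hδ1
      (integrable_rpow_abs_affineIter hZ hind hident hδ0 hδ1 hA hB u m n)
      ((identDistrib_rpow_abs_fst hident (m + n)).integrable_iff.2 hA)
      ((identDistrib_rpow_abs_snd hident (m + n)).integrable_iff.2 hB)
  simpa [affineIter] using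
    le_pow_mul_add_div_of_le_mul_add
      (e := fun n => ∫ ω, |affineIter u (fun i => Z (m + i) ω) n| ^ δ ∂μ) (by positivity) hρ
      (by positivity) hstep n

lemma measure_lt_affineIter_le (hZ : ∀ i, Measurable (Z i)) (hind : iIndepFun Z μ)
    (hident : ∀ i, IdentDistrib (Z i) (Z 0) μ μ) (hδ0 : 0 < δ) (hδ1 : δ ≤ 1)
    (hA : Integrable (fun ω => |(Z 0 ω).1| ^ δ) μ) (hB : Integrable (fun ω => |(Z 0 ω).2| ^ δ) μ)
    (hρ : ∫ ω, |(Z 0 ω).1| ^ δ ∂μ < 1) (u : ℝ) (m n : ℕ) {t : ℝ} (ht : 0 < t) :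
    μ {ω | t < affineIter u (fun i => Z (m + i) ω) n} ≤
      ENNReal.ofReal (((∫ ω, |(Z 0 ω).1| ^ δ ∂μ) ^ n * |u| ^ δ +
        (∫ ω, |(Z 0 ω).2| ^ δ ∂μ) / (1 - ∫ ω, |(Z 0 ω).1| ^ δ ∂μ)) / t ^ δ) :=
  (measure_lt_le_integral_rpow_abs_div hδ0 ht
    (integrable_rpow_abs_affineIter hZ hind hident hδ0.le hδ1 hA hB u m n)).trans <|
    ENNReal.ofReal_le_ofReal <| by
      gcongr
      exact integral_rpow_abs_affineIter_le hZ hind hident hδ0.le hδ1 hA hB hρ u m n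

end IID

section Hitting

variable {Ω : Type*}

def hitEvent (Z : ℕ → Ω → ℝ × ℝ) (M c : ℝ) (s n : ℕ) : Set Ω :=
  {ω | affineIter M (fun i => Z (s + i) ω) n ≤ c} ∩ {ω | Z (s + n) ω ∈ jumpSet c}

variable {Z : ℕ → Ω → ℝ × ℝ}

lemma measurableSet_hitEvent (M c : ℝ) (s n : ℕ) :
    MeasurableSet[sigmaOn Z (Ico s (s + (n + 1)))] (hitEvent Z M c s n) :=
  (sigmaOn_mono (Ico_subset_Ico_right (by omega)) _
      (measurable_affineIter_sigmaOn M s n measurableSet_Iic)).inter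
    (measurable_sigmaOn (i := s + n) (by simp) (measurableSet_jumpSet c))

variable [MeasurableSpace Ω] {μ : Measure Ω}

lemma measure_hitEvent (hZ : ∀ i, Measurable (Z i)) (hind : iIndepFun Z μ)
    (hident : ∀ i, IdentDistrib (Z i) (Z 0) μ μ) (M c : ℝ) (s n : ℕ) :
    μ (hitEvent Z M c s n) =
      μ {ω | affineIter M (fun i => Z (s + i) ω) n ≤ c} * μ {ω | Z 0 ω ∈ jumpSet c} := by
  have hjump : μ {ω | Z (s + n) ω ∈ jumpSet c} = μ {ω | Z 0 ω ∈ jumpSet c} :=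
    (hident (s + n)).measure_mem_eq (measurableSet_jumpSet c)
  rw [← hjump]
  exact measure_inter_eq_mul_of_disjoint hZ hind (S := Ico s (s + n)) (T := {s + n}) (by simp)
    (measurable_affineIter_sigmaOn M s n measurableSet_Iic)
    (measurable_sigmaOn (mem_singleton _) (measurableSet_jumpSet c))

lemma ae_forall_fst_pos (hident : ∀ i, IdentDistrib (Z i) (Z 0) μ μ)
    (hpos : ∀ᵐ ω ∂μ, 0 < (Z 0 ω).1) : ∀ᵐ ω ∂μ, ∀ i, 0 < (Z i ω).1 :=
  ae_all_iff.2 fun i => ((hident i).symm.comp measurable_fst).ae_mem_snd measurableSet_Ioi hpos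

variable [IsProbabilityMeasure μ]

lemma div_two_le_measure_hitEvent (hZ : ∀ i, Measurable (Z i)) (hind : iIndepFun Z μ)
    (hident : ∀ i, IdentDistrib (Z i) (Z 0) μ μ) {ρ C δ : ℝ}
    (htail : ∀ (u : ℝ) (m n : ℕ) (t : ℝ), 0 < t →
      μ {ω | t < affineIter u (fun i => Z (m + i) ω) n} ≤
        ENNReal.ofReal ((ρ ^ n * |u| ^ δ + C) / t ^ δ))
    {M₀ : ℝ} (hM₀ : 0 < M₀) (hM₀δ : 2 * (1 + C) ≤ M₀ ^ δ) {M : ℝ} (hM : 0 < M) {n : ℕ}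
    (hn : ρ ^ n * M ^ δ ≤ 1) (s : ℕ) :
    μ {ω | Z 0 ω ∈ jumpSet M₀} / 2 ≤ μ (hitEvent Z M M₀ s n) := by
  set Y := fun ω => affineIter M (fun i => Z (s + i) ω) n
  have hhigh : μ {ω | M₀ < Y ω} ≤ 2⁻¹ :=
    calc μ {ω | M₀ < Y ω} ≤ ENNReal.ofReal ((ρ ^ n * |M| ^ δ + C) / M₀ ^ δ) := htail M s n M₀ hM₀
      _ ≤ ENNReal.ofReal 2⁻¹ := by
          refine ENNReal.ofReal_le_ofReal ((div_le_iff₀ (rpow_pos_of_pos hM₀ δ)).2 ?_)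
          rw [abs_of_pos hM]
          linarith
      _ = 2⁻¹ := by rw [ENNReal.ofReal_inv_of_pos two_pos, ENNReal.ofReal_ofNat]
  have hlow : 2⁻¹ ≤ μ {ω | Y ω ≤ M₀} :=
    calc 2⁻¹ = 1 - 2⁻¹ := ENNReal.one_sub_inv_two.symm
      _ ≤ 1 - μ {ω | M₀ < Y ω} := by gcongr
      _ = μ {ω | Y ω ≤ M₀} := by
        rw [← prob_compl_eq_one_sub (measurableSet_lt measurable_const
          (measurable_affineIter hZ M s n))]
        congr 1
        ext ω
        exact not_lt (a := M₀) (b := Y ω)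
  rw [measure_hitEvent hZ hind hident, ENNReal.div_eq_inv_mul]
  exact mul_le_mul_left hlow _

lemma measure_forall_nonneg_affineIter_le (hZ : ∀ i, Measurable (Z i)) (hind : iIndepFun Z μ)
    (hident : ∀ i, IdentDistrib (Z i) (Z 0) μ μ) (hpos : ∀ᵐ ω ∂μ, 0 < (Z 0 ω).1)
    {ρ C δ : ℝ} (hρ0 : 0 ≤ ρ) (hρ1 : ρ < 1)
    (htail : ∀ (u : ℝ) (m n : ℕ) (t : ℝ), 0 < t →
      μ {ω | t < affineIter u (fun i => Z (m + i) ω) n} ≤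
        ENNReal.ofReal ((ρ ^ n * |u| ^ δ + C) / t ^ δ))
    {M₀ : ℝ} (hM₀ : 0 < M₀) (hM₀δ : 2 * (1 + C) ≤ M₀ ^ δ) (u : ℝ) {M : ℝ} (hM : 0 < M)
    (k : ℕ) :
    μ {ω | ∀ n, 0 < n → 0 ≤ affineIter u (fun i => Z i ω) n} ≤
      k * ENNReal.ofReal ((|u| ^ δ + C) / M ^ δ) + (1 - μ {ω | Z 0 ω ∈ jumpSet M₀} / 2) ^ k := by
  have hMδ : 0 < M ^ δ := rpow_pos_of_pos hM δ
  obtain ⟨n₀, hn₀⟩ : ∃ n₀ : ℕ, ρ ^ n₀ * M ^ δ ≤ 1 := by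
    obtain ⟨n₀, h⟩ := exists_pow_lt_of_lt_one (one_div_pos.2 hMδ) hρ1
    exact ⟨n₀, ((lt_div_iff₀ hMδ).1 h).le⟩
  have hstart (j : ℕ) : μ {ω | M < affineIter u (fun i => Z i ω) (j * (n₀ + 1))} ≤
      ENNReal.ofReal ((|u| ^ δ + C) / M ^ δ) := by
    have h := htail u 0 (j * (n₀ + 1)) M hM
    simp only [zero_add] at h
    refine h.trans (ENNReal.ofReal_le_ofReal ?_)
    gcongr
    exact mul_le_of_le_one_left (by positivity) (pow_le_one₀ hρ0 hρ1.le)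
  have hcover : ∀ᵐ ω ∂μ, (∀ n, 0 < n → 0 ≤ affineIter u (fun i => Z i ω) n) →
      ω ∈ (⋃ j ∈ Finset.range k, {ω | M < affineIter u (fun i => Z i ω) (j * (n₀ + 1))}) ∪
        ⋂ j ∈ Finset.range k, (hitEvent Z M M₀ (j * (n₀ + 1)) n₀)ᶜ := by
    filter_upwards [ae_forall_fst_pos hident hpos] with ω hω hnonneg
    by_contra hout
    simp only [mem_union, mem_iUnion₂, mem_iInter₂, mem_compl_iff, not_or, not_exists,
      not_forall, not_not, hitEvent, mem_inter_iff] at hout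
    obtain ⟨hlow, j, hj, hY, hjump⟩ := hout
    exact (hnonneg _ (Nat.succ_pos _)).not_gt
      (affineIter_neg_of_restart hω (not_lt.1 (hlow j hj)) hY hjump)
  calc μ {ω | ∀ n, 0 < n → 0 ≤ affineIter u (fun i => Z i ω) n}
      ≤ ∑ j ∈ Finset.range k, μ {ω | M < affineIter u (fun i => Z i ω) (j * (n₀ + 1))} +
          μ (⋂ j ∈ Finset.range k, (hitEvent Z M M₀ (j * (n₀ + 1)) n₀)ᶜ) :=
        (measure_mono_ae hcover).trans <|
          (measure_union_le _ _).trans (add_le_add (measure_biUnion_finset_le _ _) le_rfl)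
    _ ≤ ∑ _j ∈ Finset.range k, ENNReal.ofReal ((|u| ^ δ + C) / M ^ δ) +
          (1 - μ {ω | Z 0 ω ∈ jumpSet M₀} / 2) ^ k :=
        add_le_add (Finset.sum_le_sum fun j _ => hstart j) <|
          measure_biInter_compl_le hZ hind (fun j => measurableSet_hitEvent M M₀ _ n₀)
            (fun j => div_two_le_measure_hitEvent hZ hind hident htail hM₀ hM₀δ hM hn₀ _) k
    _ = _ := by rw [Finset.sum_const, Finset.card_range, nsmul_eq_mul]

lemma eq_zero_of_forall_le_mul_add_pow {x γ : ℝ≥0∞} (hγ : γ ≠ 0) {K δ : ℝ} (hδ : 0 < δ)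
    (h : ∀ M : ℝ, 0 < M → ∀ k : ℕ, x ≤ k * ENNReal.ofReal (K / M ^ δ) + (1 - γ) ^ k) :
    x = 0 := by
  have hk (k : ℕ) : x ≤ (1 - γ) ^ k := by
    have hsmall : Tendsto (fun M : ℝ => ENNReal.ofReal (K / M ^ δ)) atTop (𝓝 0) := by
      simpa using ENNReal.tendsto_ofReal (tendsto_const_nhds.div_atTop (tendsto_rpow_atTop hδ))
    have hlim : Tendsto (fun M : ℝ => k * ENNReal.ofReal (K / M ^ δ) + (1 - γ) ^ k) atTop
        (𝓝 ((1 - γ) ^ k)) := by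
      simpa using (ENNReal.Tendsto.const_mul hsmall (Or.inr (ENNReal.natCast_ne_top k))).add_const
        ((1 - γ) ^ k)
    exact ge_of_tendsto hlim ((eventually_gt_atTop 0).mono fun M hM => h M hM k)
  exact le_antisymm (ge_of_tendsto' (ENNReal.tendsto_pow_atTop_nhds_zero_of_lt_one
    (ENNReal.sub_lt_self ENNReal.one_ne_top one_ne_zero hγ)) hk) bot_le

theorem measure_forall_nonneg_affineIter_eq_zero (hZ : ∀ i, Measurable (Z i))
    (hind : iIndepFun Z μ) (hident : ∀ i, IdentDistrib (Z i) (Z 0) μ μ)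
    (hpos : ∀ᵐ ω ∂μ, 0 < (Z 0 ω).1) (hjump : ∀ c, 0 < c → 0 < μ {ω | Z 0 ω ∈ jumpSet c})
    {ρ C δ : ℝ} (hδ : 0 < δ) (hρ0 : 0 ≤ ρ) (hρ1 : ρ < 1)
    (htail : ∀ (u : ℝ) (m n : ℕ) (t : ℝ), 0 < t →
      μ {ω | t < affineIter u (fun i => Z (m + i) ω) n} ≤
        ENNReal.ofReal ((ρ ^ n * |u| ^ δ + C) / t ^ δ)) (u : ℝ) :
    μ {ω | ∀ n, 0 < n → 0 ≤ affineIter u (fun i => Z i ω) n} = 0 := by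
  obtain ⟨M₀, hM₀δ, hM₀⟩ := (((tendsto_rpow_atTop hδ).eventually_ge_atTop (2 * (1 + C))).and
    (eventually_gt_atTop 0)).exists
  exact eq_zero_of_forall_le_mul_add_pow
    (ENNReal.div_pos (hjump M₀ hM₀).ne' ENNReal.ofNat_ne_top).ne' hδ fun M hM k =>
      measure_forall_nonneg_affineIter_le hZ hind hident hpos hρ0 hρ1 htail hM₀ hM₀δ u hM k

end Hitting

end RandomAffine

open RandomAffine

/-- If `(A n, B n)` is i.i.d. with `E[|A|^δ] < 1`, `E[|B|^δ] < ∞` for some `δ ∈ (0,1)`,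
`X (n+1) u = A n * X n u + B n`, `X 0 u = u`, with `A > 0` almost surely and `B/A` unbounded
from below, then for every initial value `u`, almost surely there exists `n ≥ 1` with
`X n u < 0`. -/
theorem autoregressive_hits_negative_of_unbounded_below
    {Ω : Type*} [MeasurableSpace Ω] (μ : Measure Ω) [IsProbabilityMeasure μ]
    (A B : ℕ → Ω → ℝ) (hAmeas : ∀ n, Measurable (A n)) (hBmeas : ∀ n, Measurable (B n))
    (hindep : iIndepFun (fun n ω => (A n ω, B n ω)) μ)
    (hident : ∀ n, IdentDistrib (fun ω => (A n ω, B n ω)) (fun ω => (A 0 ω, B 0 ω)) μ μ)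
    (δ : ℝ) (hδ0 : 0 < δ) (hδ1 : δ < 1)
    (hAint : Integrable (fun ω => |A 0 ω| ^ δ) μ)
    (hA : ∫ ω, |A 0 ω| ^ δ ∂μ < 1)
    (hB : Integrable (fun ω => |B 0 ω| ^ δ) μ)
    (X : ℕ → ℝ → Ω → ℝ)
    (hX0 : ∀ u ω, X 0 u ω = u)
    (hXrec : ∀ n u ω, X (n + 1) u ω = A n ω * X n u ω + B n ω)
    (hApos : ∀ᵐ ω ∂μ, 0 < A 0 ω)
    (hBA : ∀ c : ℝ, 0 < c → 0 < μ {ω | B 0 ω / A 0 ω < -c}) :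
    ∀ u : ℝ, ∀ᵐ ω ∂μ, ∃ n : ℕ, 0 < n ∧ X n u ω < 0 := by
  have hZ (n : ℕ) : Measurable fun ω => (A n ω, B n ω) := (hAmeas n).prodMk (hBmeas n)
  have hX (u : ℝ) (ω : Ω) (n : ℕ) : X n u ω = affineIter u (fun i => (A i ω, B i ω)) n := by
    induction n with
    | zero => exact hX0 u ω
    | succ n ih => rw [hXrec, ih]; rfl
  have hjump (c : ℝ) (hc : 0 < c) : 0 < μ {ω | (A 0 ω, B 0 ω) ∈ jumpSet c} := by
    refine (hBA c hc).trans_eq (measure_congr ?_)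
    filter_upwards [hApos] with ω hω
    exact propext ⟨fun h => ⟨hω, h⟩, And.right⟩
  intro u
  have hE := measure_forall_nonneg_affineIter_eq_zero hZ hindep hident hApos hjump hδ0
    (by positivity) hA
    (fun u m n t ht => measure_lt_affineIter_le hZ hindep hident hδ0 hδ1.le hAint hB hA u m n ht) u
  rw [ae_iff]
  simpa [hX] using hE
end

section
/- Let ψ : ℝ → [0,∞) be Lebesgue-integrable and define ψ̌(x) := ∫_{−∞}^{x} e^{−(x−y)} ψ(y) dy. Then for every δ>0: (1) ψ̌(x+δ) ≥ e^{−δ} ψ̌(x) for all x; (2) δ Σ_{j∈ℤ} inf_{x∈[jδ,(j+1)δ]} ψ̌(x) ≥ e^{−2δ} ∫_ℝ ψ̌(x) dx; and (3) δ Σ_{j∈ℤ} sup_{x∈[jδ,(j+1)δ]} ψ̌(x) ≤ e^{2δ} ∫_ℝ ψ̌(x) dx. In particular the upper Riemann sums are finite and the difference between the upper and lower Riemann sums tends to 0 as δ→0 (direct Riemann integrability of ψ̌). -/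
/-!
Since `eˣ ψ̌(x) = ∫_{-∞}^x e^y ψ(y) dy` is nondecreasing, a nonnegative `f` with this property
satisfies `e^{-(b-a)} f(a) ≤ f ≤ e^{b-a} f(b)` on `[a, b]`. Hence the supremum of `f` over a
lattice cell is at most `e^{2δ}` times its infimum over the next cell, which yields
`lower sum ≤ ∫ f ≤ upper sum ≤ e^{2δ} · lower sum`. The sums are finite because
`ψ̌ = ψ ∗ 1_{[0,∞)} e^{-t}` is integrable.
-/

open MeasureTheory Real Filter Set

noncomputable def oneSidedExpConv (ψ : ℝ → ℝ) (x : ℝ) : ℝ :=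
  ∫ y in Iic x, exp (-(x - y)) * ψ y

/- `sInf`/`sSup` of an unbounded set and `∑'` of a non-summable family are `0`, which is why
the boundedness and summability lemmas below are needed. -/
noncomputable def lowerRiemannSum (f : ℝ → ℝ) (δ : ℝ) : ℝ :=
  δ * ∑' j : ℤ, sInf (f '' Icc (j * δ) ((j + 1) * δ))

noncomputable def upperRiemannSum (f : ℝ → ℝ) (δ : ℝ) : ℝ :=
  δ * ∑' j : ℤ, sSup (f '' Icc (j * δ) ((j + 1) * δ))

section Cells

variable {f : ℝ → ℝ} {a b c : ℝ}

theorem le_exp_sub_mul_of_monotone_exp_mul (hf : Monotone fun x => exp x * f x) {x y : ℝ}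
    (hxy : x ≤ y) : f x ≤ exp (y - x) * f y :=
  calc f x = exp (-x) * (exp x * f x) := by
        rw [← mul_assoc, ← exp_add, neg_add_cancel, exp_zero, one_mul]
    _ ≤ exp (-x) * (exp y * f y) := mul_le_mul_of_nonneg_left (hf hxy) (exp_pos _).le
    _ = exp (y - x) * f y := by rw [← mul_assoc, ← exp_add, neg_add_eq_sub]

theorem exp_neg_sub_mul_le_of_monotone_exp_mul (hf : Monotone fun x => exp x * f x) {x y : ℝ}
    (hxy : x ≤ y) : exp (-(y - x)) * f x ≤ f y :=
  calc exp (-(y - x)) * f x ≤ exp (-(y - x)) * (exp (y - x) * f y) := by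
        gcongr; exact le_exp_sub_mul_of_monotone_exp_mul hf hxy
    _ = f y := by rw [← mul_assoc, ← exp_add, neg_add_cancel, exp_zero, one_mul]

theorem le_exp_sub_mul_of_mem_Icc (hf : Monotone fun x => exp x * f x) (hf0 : ∀ x, 0 ≤ f x)
    {z : ℝ} (hz : z ∈ Icc a b) : f z ≤ exp (b - a) * f b :=
  (le_exp_sub_mul_of_monotone_exp_mul hf hz.2).trans <|
    mul_le_mul_of_nonneg_right (exp_le_exp.2 (by linarith [hz.1])) (hf0 b)

theorem exp_neg_sub_mul_le_of_mem_Icc (hf : Monotone fun x => exp x * f x) (hf0 : ∀ x, 0 ≤ f x)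
    {z : ℝ} (hz : z ∈ Icc a b) : exp (-(b - a)) * f a ≤ f z :=
  (mul_le_mul_of_nonneg_right (exp_le_exp.2 (by linarith [hz.2])) (hf0 a)).trans <|
    exp_neg_sub_mul_le_of_monotone_exp_mul hf hz.1

theorem bddAbove_image_Icc_of_monotone_exp_mul (hf : Monotone fun x => exp x * f x)
    (hf0 : ∀ x, 0 ≤ f x) : BddAbove (f '' Icc a b) :=
  ⟨_, forall_mem_image.2 fun _ hz => le_exp_sub_mul_of_mem_Icc hf hf0 hz⟩

theorem exp_neg_sub_mul_le_sInf_image_Icc (hf : Monotone fun x => exp x * f x)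
    (hf0 : ∀ x, 0 ≤ f x) (hab : a ≤ b) : exp (-(b - a)) * f a ≤ sInf (f '' Icc a b) :=
  le_csInf ((nonempty_Icc.2 hab).image f)
    (forall_mem_image.2 fun _ hz => exp_neg_sub_mul_le_of_mem_Icc hf hf0 hz)

theorem sSup_image_Icc_le_exp_sub_mul (hf : Monotone fun x => exp x * f x)
    (hf0 : ∀ x, 0 ≤ f x) (hab : a ≤ b) : sSup (f '' Icc a b) ≤ exp (b - a) * f b :=
  csSup_le ((nonempty_Icc.2 hab).image f)
    (forall_mem_image.2 fun _ hz => le_exp_sub_mul_of_mem_Icc hf hf0 hz)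

theorem sSup_image_Icc_le_exp_sub_mul_sInf (hf : Monotone fun x => exp x * f x)
    (hf0 : ∀ x, 0 ≤ f x) (hab : a ≤ b) (hbc : b ≤ c) :
    sSup (f '' Icc a b) ≤ exp (c - a) * sInf (f '' Icc b c) :=
  calc sSup (f '' Icc a b) ≤ exp (b - a) * f b := sSup_image_Icc_le_exp_sub_mul hf hf0 hab
    _ = exp (c - a) * (exp (-(c - b)) * f b) := by rw [← mul_assoc, ← exp_add]; ring_nf
    _ ≤ exp (c - a) * sInf (f '' Icc b c) := by
        gcongr; exact exp_neg_sub_mul_le_sInf_image_Icc hf hf0 hbc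

theorem mul_sInf_image_Icc_le_setIntegral_Ico (hab : a ≤ b) (hbdd : BddBelow (f '' Icc a b))
    (hfi : IntegrableOn f (Ico a b)) : (b - a) * sInf (f '' Icc a b) ≤ ∫ x in Ico a b, f x := by
  have h := setIntegral_ge_of_const_le_real measurableSet_Ico (by simp)
    (fun x hx => csInf_le hbdd (mem_image_of_mem f (Ico_subset_Icc_self hx))) hfi
  rwa [volume_real_Ico_of_le hab, mul_comm] at h

theorem setIntegral_Ico_le_mul_sSup_image_Icc (hab : a ≤ b) (hbdd : BddAbove (f '' Icc a b))
    (hfi : IntegrableOn f (Ico a b)) : ∫ x in Ico a b, f x ≤ (b - a) * sSup (f '' Icc a b) := by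
  have h := setIntegral_mono_on hfi (integrableOn_const (by simp)) measurableSet_Ico
    (fun x hx => le_csSup hbdd (mem_image_of_mem f (Ico_subset_Icc_self hx)))
  rwa [setIntegral_const, volume_real_Ico_of_le hab, smul_eq_mul] at h

end Cells

section RiemannSums

variable {f : ℝ → ℝ} {δ : ℝ}

theorem hasSum_setIntegral_Ico_int_mul (hfi : Integrable f) (hδ : 0 < δ) :
    HasSum (fun j : ℤ => ∫ x in Ico (j * δ) ((j + 1) * δ), f x) (∫ x, f x) := by
  have h := hasSum_integral_iUnion (fun j : ℤ => measurableSet_Ico)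
    (pairwise_disjoint_Ico_zsmul δ) (by rw [iUnion_Ico_zsmul hδ]; exact hfi.integrableOn)
  rw [iUnion_Ico_zsmul hδ, setIntegral_univ] at h
  simpa only [zsmul_eq_mul, Int.cast_add, Int.cast_one] using h

theorem mul_sInf_image_Icc_int_mul_le_setIntegral (hf0 : ∀ x, 0 ≤ f x) (hfi : Integrable f)
    (hδ : 0 < δ) (j : ℤ) :
    δ * sInf (f '' Icc (j * δ) ((j + 1) * δ)) ≤ ∫ x in Ico (j * δ) ((j + 1) * δ), f x := by
  have h := mul_sInf_image_Icc_le_setIntegral_Ico (a := j * δ) (b := (j + 1) * δ) (by linarith)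
    ⟨0, forall_mem_image.2 fun x _ => hf0 x⟩ hfi.integrableOn
  rwa [show ((j : ℝ) + 1) * δ - j * δ = δ by ring] at h

theorem setIntegral_le_mul_sSup_image_Icc_int_mul (hf : Monotone fun x => exp x * f x)
    (hf0 : ∀ x, 0 ≤ f x) (hfi : Integrable f) (hδ : 0 < δ) (j : ℤ) :
    ∫ x in Ico (j * δ) ((j + 1) * δ), f x ≤ δ * sSup (f '' Icc (j * δ) ((j + 1) * δ)) := by
  have h := setIntegral_Ico_le_mul_sSup_image_Icc (a := j * δ) (b := (j + 1) * δ) (by linarith)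
    (bddAbove_image_Icc_of_monotone_exp_mul hf hf0) hfi.integrableOn
  rwa [show ((j : ℝ) + 1) * δ - j * δ = δ by ring] at h

theorem sSup_image_Icc_int_mul_le_exp_mul_sInf_succ (hf : Monotone fun x => exp x * f x)
    (hf0 : ∀ x, 0 ≤ f x) (hδ : 0 < δ) (j : ℤ) :
    sSup (f '' Icc (j * δ) ((j + 1) * δ)) ≤
      exp (2 * δ) * sInf (f '' Icc (↑(j + 1) * δ) ((↑(j + 1) + 1) * δ)) := by
  have h := sSup_image_Icc_le_exp_sub_mul_sInf hf hf0 (a := j * δ) (b := (j + 1) * δ)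
    (c := (j + 1 + 1) * δ) (by linarith) (by linarith)
  push_cast
  convert h using 3
  ring

theorem summable_sInf_image_Icc_int_mul (hf0 : ∀ x, 0 ≤ f x) (hfi : Integrable f)
    (hδ : 0 < δ) : Summable fun j : ℤ => sInf (f '' Icc (j * δ) ((j + 1) * δ)) :=
  ((hasSum_setIntegral_Ico_int_mul hfi hδ).summable.div_const δ).of_nonneg_of_le
    (fun _ => Real.sInf_nonneg (forall_mem_image.2 fun x _ => hf0 x))
    fun j => (le_div_iff₀' hδ).2 (mul_sInf_image_Icc_int_mul_le_setIntegral hf0 hfi hδ j)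

theorem summable_sSup_image_Icc_int_mul (hf : Monotone fun x => exp x * f x)
    (hf0 : ∀ x, 0 ≤ f x) (hfi : Integrable f) (hδ : 0 < δ) :
    Summable fun j : ℤ => sSup (f '' Icc (j * δ) ((j + 1) * δ)) :=
  (((Equiv.addRight (1 : ℤ)).summable_iff.2
    (summable_sInf_image_Icc_int_mul hf0 hfi hδ)).mul_left (exp (2 * δ))).of_nonneg_of_le
    (fun _ => Real.sSup_nonneg (forall_mem_image.2 fun x _ => hf0 x))
    (sSup_image_Icc_int_mul_le_exp_mul_sInf_succ hf hf0 hδ)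

theorem lowerRiemannSum_le_integral (hf0 : ∀ x, 0 ≤ f x) (hfi : Integrable f) (hδ : 0 < δ) :
    lowerRiemannSum f δ ≤ ∫ x, f x := by
  rw [lowerRiemannSum, ← tsum_mul_left, ← (hasSum_setIntegral_Ico_int_mul hfi hδ).tsum_eq]
  exact ((summable_sInf_image_Icc_int_mul hf0 hfi hδ).mul_left δ).tsum_le_tsum
    (mul_sInf_image_Icc_int_mul_le_setIntegral hf0 hfi hδ)
    (hasSum_setIntegral_Ico_int_mul hfi hδ).summable

theorem integral_le_upperRiemannSum (hf : Monotone fun x => exp x * f x)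
    (hf0 : ∀ x, 0 ≤ f x) (hfi : Integrable f) (hδ : 0 < δ) :
    ∫ x, f x ≤ upperRiemannSum f δ := by
  rw [upperRiemannSum, ← tsum_mul_left, ← (hasSum_setIntegral_Ico_int_mul hfi hδ).tsum_eq]
  exact (hasSum_setIntegral_Ico_int_mul hfi hδ).summable.tsum_le_tsum
    (setIntegral_le_mul_sSup_image_Icc_int_mul hf hf0 hfi hδ)
    ((summable_sSup_image_Icc_int_mul hf hf0 hfi hδ).mul_left δ)

theorem upperRiemannSum_le_exp_mul_lowerRiemannSum (hf : Monotone fun x => exp x * f x)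
    (hf0 : ∀ x, 0 ≤ f x) (hfi : Integrable f) (hδ : 0 < δ) :
    upperRiemannSum f δ ≤ exp (2 * δ) * lowerRiemannSum f δ := by
  set s : ℤ → ℝ := fun j => sInf (f '' Icc (j * δ) ((j + 1) * δ))
  have hs := summable_sInf_image_Icc_int_mul hf0 hfi hδ
  have hshift : ∑' j : ℤ, s (j + 1) = ∑' j, s j := (Equiv.addRight (1 : ℤ)).tsum_eq s
  calc upperRiemannSum f δ ≤ δ * ∑' j : ℤ, exp (2 * δ) * s (j + 1) :=
        mul_le_mul_of_nonneg_left ((summable_sSup_image_Icc_int_mul hf hf0 hfi hδ).tsum_le_tsum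
          (sSup_image_Icc_int_mul_le_exp_mul_sInf_succ hf hf0 hδ)
          (((Equiv.addRight (1 : ℤ)).summable_iff.2 hs).mul_left _)) hδ.le
    _ = exp (2 * δ) * lowerRiemannSum f δ := by
        rw [tsum_mul_left, hshift, lowerRiemannSum, mul_left_comm]

theorem exp_neg_two_mul_integral_le_lowerRiemannSum (hf : Monotone fun x => exp x * f x)
    (hf0 : ∀ x, 0 ≤ f x) (hfi : Integrable f) (hδ : 0 < δ) :
    exp (-2 * δ) * ∫ x, f x ≤ lowerRiemannSum f δ :=
  calc exp (-2 * δ) * ∫ x, f x ≤ exp (-2 * δ) * (exp (2 * δ) * lowerRiemannSum f δ) :=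
        mul_le_mul_of_nonneg_left ((integral_le_upperRiemannSum hf hf0 hfi hδ).trans
          (upperRiemannSum_le_exp_mul_lowerRiemannSum hf hf0 hfi hδ)) (exp_pos _).le
    _ = lowerRiemannSum f δ := by
        rw [← mul_assoc, ← exp_add, neg_mul, neg_add_cancel, exp_zero, one_mul]

theorem upperRiemannSum_le_exp_two_mul_integral (hf : Monotone fun x => exp x * f x)
    (hf0 : ∀ x, 0 ≤ f x) (hfi : Integrable f) (hδ : 0 < δ) :
    upperRiemannSum f δ ≤ exp (2 * δ) * ∫ x, f x :=
  (upperRiemannSum_le_exp_mul_lowerRiemannSum hf hf0 hfi hδ).trans <|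
    mul_le_mul_of_nonneg_left (lowerRiemannSum_le_integral hf0 hfi hδ) (exp_pos _).le

theorem tendsto_upperRiemannSum_sub_lowerRiemannSum (hf : Monotone fun x => exp x * f x)
    (hf0 : ∀ x, 0 ≤ f x) (hfi : Integrable f) :
    Tendsto (fun δ => upperRiemannSum f δ - lowerRiemannSum f δ) (nhdsWithin 0 (Ioi 0))
      (nhds 0) := by
  have hlim : Tendsto (fun δ : ℝ => (exp (2 * δ) - 1) * ∫ x, f x) (nhdsWithin 0 (Ioi 0))
      (nhds 0) := by
    have hcont : Continuous fun δ : ℝ => (exp (2 * δ) - 1) * ∫ x, f x := by fun_prop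
    simpa using (hcont.tendsto 0).mono_left nhdsWithin_le_nhds
  refine squeeze_zero' ?_ ?_ hlim <;> filter_upwards [self_mem_nhdsWithin] with δ (hδ : 0 < δ)
  · linarith [lowerRiemannSum_le_integral hf0 hfi hδ, integral_le_upperRiemannSum hf hf0 hfi hδ]
  · have hlower := lowerRiemannSum_le_integral hf0 hfi hδ
    have hupper := upperRiemannSum_le_exp_mul_lowerRiemannSum hf hf0 hfi hδ
    have hexp : 0 ≤ exp (2 * δ) - 1 := sub_nonneg.2 (one_le_exp (by linarith))
    nlinarith

end RiemannSums

section OneSidedExpConv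

variable {ψ : ℝ → ℝ}

theorem MeasureTheory.Integrable.integrableOn_exp_mul_Iic (hψ : Integrable ψ) (x : ℝ) :
    IntegrableOn (fun y => exp y * ψ y) (Iic x) :=
  hψ.integrableOn.bdd_mul continuous_exp.aestronglyMeasurable <|
    (ae_restrict_mem measurableSet_Iic).mono fun y hy => by
      rw [norm_of_nonneg (exp_pos y).le]
      exact exp_le_exp.2 hy

theorem exp_mul_oneSidedExpConv (ψ : ℝ → ℝ) (x : ℝ) :
    exp x * oneSidedExpConv ψ x = ∫ y in Iic x, exp y * ψ y := by
  rw [oneSidedExpConv, ← integral_const_mul]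
  congr 1 with y
  rw [← mul_assoc, ← exp_add]
  ring_nf

theorem monotone_exp_mul_oneSidedExpConv (hψ : Integrable ψ) (hψ0 : ∀ x, 0 ≤ ψ x) :
    Monotone fun x => exp x * oneSidedExpConv ψ x := by
  intro x x' hxx'
  simp only [exp_mul_oneSidedExpConv]
  exact setIntegral_mono_set (hψ.integrableOn_exp_mul_Iic x')
    (Eventually.of_forall fun y => mul_nonneg (exp_pos y).le (hψ0 y))
    (Iic_subset_Iic.2 hxx').eventuallyLE

theorem oneSidedExpConv_nonneg (hψ0 : ∀ x, 0 ≤ ψ x) (x : ℝ) : 0 ≤ oneSidedExpConv ψ x :=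
  setIntegral_nonneg measurableSet_Iic fun y _ => mul_nonneg (exp_pos _).le (hψ0 y)

theorem oneSidedExpConv_eq_convolution (ψ : ℝ → ℝ) :
    oneSidedExpConv ψ = convolution ψ ((Ici 0).indicator fun t => exp (-t))
      (ContinuousLinearMap.lsmul ℝ ℝ) volume := by
  ext x
  rw [oneSidedExpConv, convolution_def, ← integral_indicator measurableSet_Iic]
  congr 1 with y
  simp [indicator_apply, mul_comm]

theorem integrable_oneSidedExpConv (hψ : Integrable ψ) : Integrable (oneSidedExpConv ψ) := by
  have hexp : Integrable ((Ici (0 : ℝ)).indicator fun t => exp (-t)) :=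
    (integrable_indicator_iff measurableSet_Ici).2 <| (integrableOn_Ici_iff_integrableOn_Ioi).2 <| by
      simpa using exp_neg_integrableOn_Ioi 0 one_pos
  rw [oneSidedExpConv_eq_convolution]
  exact hψ.integrable_convolution _ hexp

end OneSidedExpConv

/-- For a nonnegative Lebesgue-integrable `ψ : ℝ → ℝ` and the one-sided exponential
convolution `ψ̌ x = ∫_{-∞}^x e^{-(x-y)} ψ(y) dy`, for every `δ > 0`:
(1) `ψ̌ (x + δ) ≥ e^{-δ} ψ̌ x`; (2) the lower Riemann sum
`δ Σ_{j∈ℤ} inf_{[jδ,(j+1)δ]} ψ̌` is at least `e^{-2δ} ∫ ψ̌`; (3) the upper Riemann sum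
`δ Σ_{j∈ℤ} sup_{[jδ,(j+1)δ]} ψ̌` is at most `e^{2δ} ∫ ψ̌`. In particular the difference of
the upper and lower Riemann sums tends to `0` as `δ → 0` (direct Riemann integrability). -/
theorem exp_convolution_directly_riemann_integrable
    (ψ : ℝ → ℝ) (hψ : Integrable ψ (volume : Measure ℝ)) (hψ0 : ∀ x, 0 ≤ ψ x)
    (ψc : ℝ → ℝ) (hψc : ∀ x, ψc x = ∫ y in Set.Iic x, Real.exp (-(x - y)) * ψ y) :
    (∀ δ : ℝ, 0 < δ → ∀ x : ℝ, Real.exp (-δ) * ψc x ≤ ψc (x + δ)) ∧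
    (∀ δ : ℝ, 0 < δ →
      Real.exp (-2 * δ) * ∫ x, ψc x ≤
        δ * ∑' j : ℤ, sInf (ψc '' Set.Icc (j * δ) ((j + 1) * δ))) ∧
    (∀ δ : ℝ, 0 < δ →
      δ * ∑' j : ℤ, sSup (ψc '' Set.Icc (j * δ) ((j + 1) * δ)) ≤
        Real.exp (2 * δ) * ∫ x, ψc x) ∧
    Tendsto
      (fun δ : ℝ =>
        δ * ∑' j : ℤ, sSup (ψc '' Set.Icc (j * δ) ((j + 1) * δ)) -
        δ * ∑' j : ℤ, sInf (ψc '' Set.Icc (j * δ) ((j + 1) * δ)))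
      (nhdsWithin 0 (Set.Ioi 0)) (nhds 0) := by
  obtain rfl : ψc = oneSidedExpConv ψ := funext hψc
  have hmono := monotone_exp_mul_oneSidedExpConv hψ hψ0
  have hnonneg := oneSidedExpConv_nonneg hψ0
  have hint := integrable_oneSidedExpConv hψ
  refine ⟨fun δ hδ x => ?_,
    fun δ hδ => exp_neg_two_mul_integral_le_lowerRiemannSum hmono hnonneg hint hδ,
    fun δ hδ => upperRiemannSum_le_exp_two_mul_integral hmono hnonneg hint hδ,
    tendsto_upperRiemannSum_sub_lowerRiemannSum hmono hnonneg hint⟩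
  simpa using exp_neg_sub_mul_le_of_monotone_exp_mul hmono (le_add_of_nonneg_right hδ.le)
end

section
/- Let β>0, let (M,Q) be a random vector with M>0 almost surely, E[M^β]=1 and E[|Q|^β]<∞, and let Y be a random variable independent of (M,Q) with E[|Y|^p]<∞ for every p∈(0,β). Set η := M·Y. Then E[ |((Q+η)⁺)^β − (η⁺)^β| ] < ∞, where x⁺ := max(x,0). -/
open MeasureTheory ProbabilityTheory Real NNReal

-- |a^β - b^β| ≤ |a-b|^β for 0 ≤ a,b and 0 < β ≤ 1
lemma aux_rpow_sub_le {a b β : ℝ} (ha : 0 ≤ a) (hb : 0 ≤ b) (hβ : 0 < β) (hβ1 : β ≤ 1) :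
    |a ^ β - b ^ β| ≤ |a - b| ^ β := by
  wlog h : b ≤ a generalizing a b
  · rw [abs_sub_comm, abs_sub_comm a b]; exact this hb ha (le_of_not_ge h)
  have h1 : b ^ β ≤ a ^ β := Real.rpow_le_rpow hb h hβ.le
  rw [abs_of_nonneg (by linarith), abs_of_nonneg (by linarith)]
  have hab : (0:ℝ) ≤ a - b := by linarith
  have key : a ^ β ≤ b ^ β + (a - b) ^ β := by
    have h2 := NNReal.rpow_add_le_add_rpow b.toNNReal (a - b).toNNReal hβ.le hβ1
    have hc : ((b.toNNReal + (a - b).toNNReal : ℝ≥0) : ℝ) = a := by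
      push_cast [Real.coe_toNNReal _ hb, Real.coe_toNNReal _ hab]; ring
    calc a ^ β = ((b.toNNReal + (a - b).toNNReal : ℝ≥0) : ℝ) ^ β := by rw [hc]
      _ = (((b.toNNReal + (a - b).toNNReal) ^ β : ℝ≥0) : ℝ) := by
          rw [NNReal.coe_rpow]
      _ ≤ ((b.toNNReal ^ β + (a - b).toNNReal ^ β : ℝ≥0) : ℝ) := by exact_mod_cast h2
      _ = b ^ β + (a - b) ^ β := by
          push_cast [NNReal.coe_rpow, Real.coe_toNNReal _ hb, Real.coe_toNNReal _ hab]
          ring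
  linarith

-- tangent line bound: 0 ≤ b ≤ a, 1 ≤ β : a^β - b^β ≤ β * a^(β-1) * (a-b)
lemma aux_tangent {a b β : ℝ} (hb : 0 ≤ b) (h : b ≤ a) (hβ : 1 ≤ β) :
    a ^ β - b ^ β ≤ β * a ^ (β - 1) * (a - b) := by
  rcases eq_or_lt_of_le (hb.trans h) with ha | ha
  · have hb0 : b = 0 := le_antisymm (h.trans ha.symm.le) hb
    rw [← ha, hb0]
    simp [Real.zero_rpow (by positivity : β ≠ 0)]
  · have hs : (-1 : ℝ) ≤ b / a - 1 := by
      have : 0 ≤ b / a := div_nonneg hb ha.le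
      linarith
    have hbern := one_add_mul_self_le_rpow_one_add hs hβ
    have h1 : (1 : ℝ) + (b / a - 1) = b / a := by ring
    rw [h1] at hbern
    have hdiv : (b / a) ^ β = b ^ β / a ^ β := Real.div_rpow hb ha.le β
    rw [hdiv] at hbern
    have haβ : (0:ℝ) < a ^ β := Real.rpow_pos_of_pos ha β
    have hmul := mul_le_mul_of_nonneg_right hbern haβ.le
    rw [div_mul_cancel₀ _ (ne_of_gt haβ)] at hmul
    have hpow : a ^ β = a * a ^ (β - 1) := by
      rw [← Real.rpow_one_add' ha.le (by linarith : (1:ℝ) + (β - 1) ≠ 0)]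
      ring_nf
    have hba : b / a * a = b := div_mul_cancel₀ b (ne_of_gt ha)
    have hexp : b / a * a ^ β = b * a ^ (β - 1) := by
      rw [hpow, ← mul_assoc, hba]
    nlinarith [Real.rpow_nonneg ha.le (β - 1)]

-- |u^β - v^β| ≤ β * (max u v)^(β-1) * |u - v| for 0 ≤ u, v, 1 ≤ β
lemma aux_diff_bound {u v β : ℝ} (hu : 0 ≤ u) (hv : 0 ≤ v) (hβ : 1 ≤ β) :
    |u ^ β - v ^ β| ≤ β * (max u v) ^ (β - 1) * |u - v| := by
  wlog h : v ≤ u generalizing u v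
  · rw [abs_sub_comm, abs_sub_comm u v, max_comm]
    exact this hv hu (le_of_not_ge h)
  have h1 : v ^ β ≤ u ^ β := Real.rpow_le_rpow hv h (by linarith)
  rw [abs_of_nonneg (by linarith), abs_of_nonneg (by linarith), max_eq_left h]
  exact aux_tangent hv h hβ

/-- Let `β > 0`, let `(M, Q)` be a random vector with `M > 0` a.s., `E[M^β] = 1` and
`E[|Q|^β] < ∞`, and let `Y` be independent of `(M, Q)` with `E[|Y|^p] < ∞` for all
`p ∈ (0, β)`. Then, with `η = M * Y`, `E[|((Q+η)⁺)^β − (η⁺)^β|] < ∞`. -/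
theorem integrable_positive_part_power_difference
    {Ω : Type*} [MeasurableSpace Ω] (μ : Measure Ω) [IsProbabilityMeasure μ]
    (M Q Y : Ω → ℝ) (hMmeas : Measurable M) (hQmeas : Measurable Q) (hYmeas : Measurable Y)
    (β : ℝ) (hβ : 0 < β)
    (hMpos : ∀ᵐ ω ∂μ, 0 < M ω)
    (hMβint : Integrable (fun ω => M ω ^ β) μ)
    (hMβ : ∫ ω, M ω ^ β ∂μ = 1)
    (hQβ : Integrable (fun ω => |Q ω| ^ β) μ)
    (hindep : IndepFun Y (fun ω => (M ω, Q ω)) μ)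
    (hYmom : ∀ p : ℝ, 0 < p → p < β → Integrable (fun ω => |Y ω| ^ p) μ) :
    Integrable
      (fun ω =>
        |max (Q ω + M ω * Y ω) 0 ^ β - max (M ω * Y ω) 0 ^ β|) μ := by
  have hmeas : AEStronglyMeasurable
      (fun ω => |max (Q ω + M ω * Y ω) 0 ^ β - max (M ω * Y ω) 0 ^ β|) μ := by
    apply Measurable.aestronglyMeasurable
    fun_prop
  rcases le_or_gt β 1 with hβ1 | hβ1
  · -- case β ≤ 1 : dominated by |Q|^β
    refine Integrable.mono' hQβ hmeas ?_
    filter_upwards with ω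
    rw [Real.norm_eq_abs, abs_abs]
    have huv : |max (Q ω + M ω * Y ω) 0 - max (M ω * Y ω) 0| ≤ |Q ω| := by
      have := abs_max_sub_max_le_abs (Q ω + M ω * Y ω) (M ω * Y ω) 0
      simpa using this
    calc |max (Q ω + M ω * Y ω) 0 ^ β - max (M ω * Y ω) 0 ^ β|
        ≤ |max (Q ω + M ω * Y ω) 0 - max (M ω * Y ω) 0| ^ β :=
          aux_rpow_sub_le (le_max_right _ _) (le_max_right _ _) hβ hβ1
      _ ≤ |Q ω| ^ β := Real.rpow_le_rpow (abs_nonneg _) huv hβ.le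
  · -- case β > 1
    have hβ1' : (1:ℝ) ≤ β := hβ1.le
    have hY : Integrable (fun ω => |Y ω| ^ (β - 1)) μ := hYmom _ (by linarith) (by linarith)
    have hQM : Integrable (fun ω => |Q ω| ^ β + M ω ^ β) μ := hQβ.add hMβint
    have hind2 : IndepFun (fun ω => |Q ω| ^ β + M ω ^ β) (fun ω => |Y ω| ^ (β - 1)) μ :=
      (hindep.comp (by fun_prop : Measurable (fun y : ℝ => |y| ^ (β - 1)))
        (by fun_prop : Measurable (fun p : ℝ × ℝ => |p.2| ^ β + p.1 ^ β))).symm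
    have hprod : Integrable (fun ω => (|Q ω| ^ β + M ω ^ β) * |Y ω| ^ (β - 1)) μ :=
      hind2.integrable_mul hQM hY
    have hg : Integrable (fun ω =>
        β * 2 ^ (β - 1) * ((|Q ω| ^ β + M ω ^ β) * |Y ω| ^ (β - 1) + |Q ω| ^ β)) μ :=
      (hprod.add hQβ).const_mul _
    refine Integrable.mono' hg hmeas ?_
    filter_upwards [hMpos] with ω hM
    rw [Real.norm_eq_abs, abs_abs]
    set q := Q ω with hq
    set e := M ω * Y ω with he
    set u := max (q + e) 0 with hu'
    set v := max e 0 with hv'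
    set d := |q| with hd'
    have hu : (0:ℝ) ≤ u := le_max_right _ _
    have hv : (0:ℝ) ≤ v := le_max_right _ _
    have hd : (0:ℝ) ≤ d := abs_nonneg _
    have hβ1n : (0:ℝ) ≤ β - 1 := by linarith
    have huv : |u - v| ≤ d := by
      have := abs_max_sub_max_le_abs (q + e) e 0
      simpa using this
    have hmaxle : max u v ≤ v + d := by
      refine max_le ?_ (by linarith)
      have h1 : u - v ≤ |u - v| := le_abs_self _
      linarith
    have hA : (max u v) ^ (β - 1) ≤ (v + d) ^ (β - 1) :=
      Real.rpow_le_rpow (le_trans hu (le_max_left _ _)) hmaxle hβ1n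
    have hB : (v + d) ^ (β - 1) ≤ 2 ^ (β - 1) * (v ^ (β - 1) + d ^ (β - 1)) := by
      have h1 : v + d ≤ 2 * max v d := by
        have := le_max_left v d; have := le_max_right v d; linarith
      have h2 : (v + d) ^ (β - 1) ≤ (2 * max v d) ^ (β - 1) :=
        Real.rpow_le_rpow (by linarith) h1 hβ1n
      have h3 : (2 * max v d) ^ (β - 1) = 2 ^ (β - 1) * (max v d) ^ (β - 1) :=
        Real.mul_rpow (by norm_num) (le_trans hv (le_max_left _ _))
      have h4 : (max v d) ^ (β - 1) ≤ v ^ (β - 1) + d ^ (β - 1) := by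
        rcases le_total v d with h | h
        · rw [max_eq_right h]
          linarith [Real.rpow_nonneg hv (β - 1)]
        · rw [max_eq_left h]
          linarith [Real.rpow_nonneg hd (β - 1)]
      calc (v + d) ^ (β - 1) ≤ (2 * max v d) ^ (β - 1) := h2
        _ = 2 ^ (β - 1) * (max v d) ^ (β - 1) := h3
        _ ≤ 2 ^ (β - 1) * (v ^ (β - 1) + d ^ (β - 1)) := by
            have : (0:ℝ) ≤ (2:ℝ) ^ (β - 1) := Real.rpow_nonneg (by norm_num) _
            nlinarith
    have hvM : v ≤ M ω * |Y ω| := by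
      refine max_le ?_ (by positivity)
      exact mul_le_mul_of_nonneg_left (le_abs_self _) hM.le
    have hv1 : v ^ (β - 1) ≤ M ω ^ (β - 1) * |Y ω| ^ (β - 1) := by
      rw [← Real.mul_rpow hM.le (abs_nonneg _)]
      exact Real.rpow_le_rpow hv hvM hβ1n
    have hdM : d * M ω ^ (β - 1) ≤ d ^ β + M ω ^ β := by
      set m := max d (M ω) with hm'
      have hm : (0:ℝ) < m := lt_of_lt_of_le hM (le_max_right _ _)
      have h1 : d * M ω ^ (β - 1) ≤ m * m ^ (β - 1) := by
        refine mul_le_mul (le_max_left _ _)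
          (Real.rpow_le_rpow hM.le (le_max_right _ _) hβ1n)
          (Real.rpow_nonneg hM.le _) hm.le
      have h2 : m * m ^ (β - 1) = m ^ β := by
        rw [← Real.rpow_one_add' hm.le (by linarith : (1:ℝ) + (β - 1) ≠ 0)]
        ring_nf
      have h3 : m ^ β ≤ d ^ β + M ω ^ β := by
        rcases le_total d (M ω) with h | h
        · rw [hm', max_eq_right h]
          linarith [Real.rpow_nonneg hd β]
        · rw [hm', max_eq_left h]
          linarith [Real.rpow_nonneg hM.le β]
      linarith
    have hdd : d * d ^ (β - 1) = d ^ β := by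
      rw [← Real.rpow_one_add' hd (by linarith : (1:ℝ) + (β - 1) ≠ 0)]
      ring_nf
    have hdv : d * v ^ (β - 1) ≤ (d ^ β + M ω ^ β) * |Y ω| ^ (β - 1) := by
      calc d * v ^ (β - 1) ≤ d * (M ω ^ (β - 1) * |Y ω| ^ (β - 1)) :=
            mul_le_mul_of_nonneg_left hv1 hd
        _ = (d * M ω ^ (β - 1)) * |Y ω| ^ (β - 1) := by ring
        _ ≤ (d ^ β + M ω ^ β) * |Y ω| ^ (β - 1) :=
            mul_le_mul_of_nonneg_right hdM (Real.rpow_nonneg (abs_nonneg _) _)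
    have h2pos : (0:ℝ) ≤ (2:ℝ) ^ (β - 1) := Real.rpow_nonneg (by norm_num) _
    calc |u ^ β - v ^ β|
        ≤ β * (max u v) ^ (β - 1) * |u - v| := aux_diff_bound hu hv hβ1'
      _ ≤ β * ((v + d) ^ (β - 1)) * d := by
          refine mul_le_mul (mul_le_mul_of_nonneg_left hA hβ.le) huv (abs_nonneg _) ?_
          positivity
      _ ≤ β * (2 ^ (β - 1) * (v ^ (β - 1) + d ^ (β - 1))) * d := by
          refine mul_le_mul_of_nonneg_right (mul_le_mul_of_nonneg_left hB hβ.le) hd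
      _ = β * 2 ^ (β - 1) * (d * v ^ (β - 1) + d * d ^ (β - 1)) := by ring
      _ = β * 2 ^ (β - 1) * (d * v ^ (β - 1) + d ^ β) := by rw [hdd]
      _ ≤ β * 2 ^ (β - 1) * ((d ^ β + M ω ^ β) * |Y ω| ^ (β - 1) + d ^ β) := by
          have hnn : (0:ℝ) ≤ β * 2 ^ (β - 1) := by positivity
          nlinarith
      _ = β * 2 ^ (β - 1) * ((|Q ω| ^ β + M ω ^ β) * |Y ω| ^ (β - 1) + |Q ω| ^ β) := by
          rw [hd']
end

section
/- Let (M_j,Q_j)_{j≥1} be an i.i.d. sequence of random vectors with M_j>0 almost surely, and suppose there exists p∈(0,1] such that ρ := E[M_1^p] < 1 and E[|Q_1|^p] < ∞. Then: (1) Σ_{n≥1} |Q_n| ∏_{j=1}^{n−1} M_j < ∞ almost surely, so that Y_∞ := Σ_{n≥1} Q_n ∏_{j=1}^{n−1} M_j converges almost surely to a finite random variable; (2) writing Y_{1,∞} := Σ_{n≥2} Q_n ∏_{j=2}^{n−1} M_j, one has Y_∞ = Q_1 + M_1·Y_{1,∞}, where Y_{1,∞} is independent of (M_1,Q_1) and has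 the same law as Y_∞; in particular Y_∞ solves the distributional equation Y_∞ =d Q_1 + M_1·Y_∞ with Y_∞ independent of (M_1,Q_1). -/
/-!
Write `X n = (M n, Q n)` and `perpetuity x = ∑ₙ (x n).2 * ∏_{j<n} (x j).1`, so that
`Y∞ = perpetuity (X n)ₙ` and `Y_{1,∞} = perpetuity (X (n + 1))ₙ`.

By independence, `E[(|Q n| ∏_{j<n} M j) ^ p] = E[|Q 0| ^ p] * ρ ^ n`, a summable geometric
sequence, so `∑ₙ (|Q n| ∏_{j<n} M j) ^ p < ∞` almost surely; for `p ≤ 1` the `ℓᵖ`-summability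
implies `ℓ¹`-summability. The identity `Y∞ = Q 0 + M 0 * Y_{1,∞}` is then a rearrangement of an
absolutely convergent series. Finally, the shifted sequence `(X (n + 1))ₙ` is independent of
`X 0` and, being i.i.d. with the same marginal, has the same law (the infinite product measure)
as `(X n)ₙ`; both facts pass to the images under the measurable map `perpetuity`.
-/

open MeasureTheory ProbabilityTheory Finset
open scoped ENNReal

theorem summable_norm_of_tsum_enorm_rpow_ne_top {ι E : Type*} [NormedAddCommGroup E]
    {f : ι → E} {p : ℝ} (hp0 : 0 < p) (hp1 : p ≤ 1) (h : ∑' i, ‖f i‖ₑ ^ p ≠ ∞) :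
    Summable fun i => ‖f i‖ := by
  have hp : Memℓp f (ENNReal.ofReal p) := by
    refine memℓp_gen ?_
    simpa only [← ENNReal.toReal_rpow, toReal_enorm, ENNReal.toReal_ofReal hp0.le]
      using ENNReal.summable_toReal h
  simpa using (memℓp_gen_iff (by simp)).1 (hp.of_exponent_ge (ENNReal.ofReal_le_one.2 hp1))

namespace ProbabilityTheory

variable {Ω β : Type*} {mΩ : MeasurableSpace Ω} [MeasurableSpace β] {μ : Measure Ω}
  {X : ℕ → Ω → β}

theorem iIndepFun.indepFun_shift (hX : ∀ n, Measurable (X n)) (h : iIndepFun X μ) :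
    IndepFun (fun ω n => X (n + 1) ω) (X 0) μ := by
  have hindep := indep_iSup_of_disjoint (fun n => (hX n).comap_le)
    ((iIndepFun_iff_iIndep _ _ _).1 h) (S := Set.range Nat.succ) (T := {0})
    (by simp [Set.disjoint_singleton_right])
  rw [IndepFun_iff_Indep]
  refine indep_of_indep_of_le_right (indep_of_indep_of_le_left hindep ?_) ?_
  · simp_rw [MeasurableSpace.pi, MeasurableSpace.comap_iSup, MeasurableSpace.comap_comp]
    exact iSup_le fun n => le_iSup₂_of_le (n + 1) ⟨n, rfl⟩ le_rfl
  · exact le_iSup₂_of_le 0 rfl le_rfl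

theorem iIndepFun.map_shift_eq [IsProbabilityMeasure μ] (hX : ∀ n, Measurable (X n))
    (h : iIndepFun X μ) (hident : ∀ n, IdentDistrib (X n) (X 0) μ μ) :
    μ.map (fun ω n => X (n + 1) ω) = μ.map (fun ω n => X n ω) := by
  rw [(h.precomp Nat.succ_injective).map_fun_eq_infinitePi_map (fun n => hX _),
    h.map_fun_eq_infinitePi_map hX]
  congr 1
  funext n
  exact (hident (n + 1)).map_eq.trans (hident n).map_eq.symm

theorem iIndepFun.lintegral_comp_mul_prod_comp (hX : ∀ n, Measurable (X n))
    (h : iIndepFun X μ) (hident : ∀ n, IdentDistrib (X n) (X 0) μ μ) {f g : β → ℝ≥0∞}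
    (hf : Measurable f) (hg : Measurable g) (n : ℕ) :
    ∫⁻ ω, g (X n ω) * ∏ j ∈ range n, f (X j ω) ∂μ =
      (∫⁻ ω, g (X 0 ω) ∂μ) * (∫⁻ ω, f (X 0 ω) ∂μ) ^ n := by
  classical
  -- `g` at index `n` and `f` elsewhere turns the integrand into a product of independent factors
  let F : ℕ → β → ℝ≥0∞ := fun i => if i = n then g else f
  have hF : ∀ i, Measurable (F i) := fun i => by by_cases hi : i = n <;> simp [F, hi, hf, hg]
  have hFf : ∀ j ∈ range n, F j = f := fun j hj => if_neg (mem_range.1 hj).ne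
  have hlaw : ∀ i {u : β → ℝ≥0∞}, Measurable u → ∫⁻ ω, u (X i ω) ∂μ = ∫⁻ ω, u (X 0 ω) ∂μ :=
    fun i u hu => ((hident i).comp hu).lintegral_eq
  calc ∫⁻ ω, g (X n ω) * ∏ j ∈ range n, f (X j ω) ∂μ
      = ∫⁻ ω, ∏ i ∈ range (n + 1), F i (X i ω) ∂μ := by
        refine lintegral_congr fun ω => ?_
        rw [prod_range_succ, mul_comm, prod_congr rfl fun j hj => congrFun (hFf j hj) _]
        simp [F]
    _ = ∏ i ∈ range (n + 1), ∫⁻ ω, F i (X i ω) ∂μ :=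
        lintegral_prod_eq_prod_lintegral_of_indepFun _ _ (h.comp F hF)
          fun i => (hF i).comp (hX i)
    _ = (∫⁻ ω, g (X 0 ω) ∂μ) * (∫⁻ ω, f (X 0 ω) ∂μ) ^ n := by
        rw [prod_range_succ, mul_comm, prod_congr rfl fun j hj => by rw [hFf j hj, hlaw j hf]]
        simp [F, hlaw n hg]

theorem iIndepFun.ae_tsum_mul_prod_lt_top (hX : ∀ n, Measurable (X n)) (h : iIndepFun X μ)
    (hident : ∀ n, IdentDistrib (X n) (X 0) μ μ) {f g : β → ℝ≥0∞} (hf : Measurable f)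
    (hg : Measurable g) (hf_lt : ∫⁻ ω, f (X 0 ω) ∂μ < 1) (hg_ne : ∫⁻ ω, g (X 0 ω) ∂μ ≠ ∞) :
    ∀ᵐ ω ∂μ, ∑' n, g (X n ω) * ∏ j ∈ range n, f (X j ω) < ∞ := by
  have hmeas : ∀ n, Measurable fun ω => g (X n ω) * ∏ j ∈ range n, f (X j ω) := fun n =>
    (hg.comp (hX n)).mul (Finset.measurable_prod _ fun j _ => hf.comp (hX j))
  refine ae_lt_top (Measurable.tsum hmeas) ?_
  rw [lintegral_tsum fun n => (hmeas n).aemeasurable]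
  simp_rw [h.lintegral_comp_mul_prod_comp hX hident hf hg]
  rw [ENNReal.tsum_mul_left, ENNReal.tsum_geometric]
  exact ENNReal.mul_ne_top hg_ne (ENNReal.inv_ne_top.2 (tsub_pos_iff_lt.2 hf_lt).ne')

theorem iIndepFun.ae_summable_norm_mul_prod {X : ℕ → Ω → ℝ × ℝ} (hX : ∀ n, Measurable (X n))
    (h : iIndepFun X μ) (hident : ∀ n, IdentDistrib (X n) (X 0) μ μ) {p : ℝ} (hp0 : 0 < p)
    (hp1 : p ≤ 1) (hfst : ∫⁻ ω, ‖(X 0 ω).1‖ₑ ^ p ∂μ < 1)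
    (hsnd : ∫⁻ ω, ‖(X 0 ω).2‖ₑ ^ p ∂μ ≠ ∞) :
    ∀ᵐ ω ∂μ, Summable fun n => ‖(X n ω).2 * ∏ j ∈ range n, (X j ω).1‖ := by
  filter_upwards [h.ae_tsum_mul_prod_lt_top hX hident (f := fun x => ‖x.1‖ₑ ^ p)
    (g := fun x => ‖x.2‖ₑ ^ p) (by fun_prop) (by fun_prop) hfst hsnd] with ω hω
  refine summable_norm_of_tsum_enorm_rpow_ne_top hp0 hp1 ?_
  simpa [enorm_mul, enorm_eq_nnnorm, nnnorm_prod, ENNReal.mul_rpow_of_nonneg _ _ hp0.le,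
    ENNReal.prod_rpow_of_nonneg hp0.le] using hω.ne

end ProbabilityTheory

noncomputable def perpetuity (x : ℕ → ℝ × ℝ) : ℝ :=
  ∑' n, (x n).2 * ∏ j ∈ range n, (x j).1

theorem measurable_perpetuity : Measurable perpetuity :=
  Measurable.tsum fun n => by fun_prop

theorem perpetuity_eq_add_mul_perpetuity_shift {x : ℕ → ℝ × ℝ}
    (hx : Summable fun n => (x n).2 * ∏ j ∈ range n, (x j).1) :
    perpetuity x = (x 0).2 + (x 0).1 * perpetuity fun n => x (n + 1) := by
  rw [perpetuity, hx.tsum_eq_zero_add, perpetuity, ← tsum_mul_left]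
  simp only [prod_range_zero, mul_one, prod_range_succ']
  congr 1
  exact tsum_congr fun n => by ring

/-- Let `(M j, Q j)` be i.i.d. with `M > 0` a.s. and suppose there is `p ∈ (0,1]` with
`ρ = E[M^p] < 1` and `E[|Q|^p] < ∞`. Then the series `Y∞ = Σ_{n≥0} Q n ∏_{j<n} M j`
converges absolutely a.s.; moreover, with `Y1∞ = Σ_{n≥1} Q n ∏_{1≤j<n} M j` one has
`Y∞ = Q 0 + M 0 * Y1∞` a.s., `Y1∞` is independent of `(M 0, Q 0)` and has the same law as
`Y∞`; in particular `Y∞` solves the distributional equation `Y∞ =d Q + M * Y∞`. -/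
theorem perpetuity_series_solves_distributional_equation
    {Ω : Type*} [MeasurableSpace Ω] (μ : Measure Ω) [IsProbabilityMeasure μ]
    (M Q : ℕ → Ω → ℝ) (hMmeas : ∀ n, Measurable (M n)) (hQmeas : ∀ n, Measurable (Q n))
    (hindep : iIndepFun (fun n ω => (M n ω, Q n ω)) μ)
    (hident : ∀ n, IdentDistrib (fun ω => (M n ω, Q n ω)) (fun ω => (M 0 ω, Q 0 ω)) μ μ)
    (hMpos : ∀ᵐ ω ∂μ, ∀ n, 0 < M n ω)
    (p : ℝ) (hp0 : 0 < p) (hp1 : p ≤ 1)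
    (hMint : Integrable (fun ω => M 0 ω ^ p) μ)
    (hρ : ∫ ω, M 0 ω ^ p ∂μ < 1)
    (hQint : Integrable (fun ω => |Q 0 ω| ^ p) μ)
    (Yinf Y1inf : Ω → ℝ)
    (hYinf : ∀ ω, Yinf ω = ∑' n : ℕ, Q n ω * ∏ j ∈ Finset.range n, M j ω)
    (hY1inf : ∀ ω, Y1inf ω = ∑' n : ℕ, Q (n + 1) ω * ∏ j ∈ Finset.Ico 1 (n + 1), M j ω) :
    (∀ᵐ ω ∂μ, Summable (fun n : ℕ => |Q n ω| * ∏ j ∈ Finset.range n, M j ω)) ∧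
    (∀ᵐ ω ∂μ, Yinf ω = Q 0 ω + M 0 ω * Y1inf ω) ∧
    IndepFun Y1inf (fun ω => (M 0 ω, Q 0 ω)) μ ∧
    Measure.map Y1inf μ = Measure.map Yinf μ := by
  set X : ℕ → Ω → ℝ × ℝ := fun n ω => (M n ω, Q n ω)
  have hX : ∀ n, Measurable (X n) := fun n => (hMmeas n).prodMk (hQmeas n)
  have hM : ∫⁻ ω, ‖M 0 ω‖ₑ ^ p ∂μ < 1 := by
    have hMnn : ∀ᵐ ω ∂μ, 0 ≤ M 0 ω := by filter_upwards [hMpos] with ω hω using (hω 0).le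
    rw [lintegral_congr_ae (g := fun ω => ENNReal.ofReal (M 0 ω ^ p)),
      ← ofReal_integral_eq_lintegral_ofReal hMint, ENNReal.ofReal_lt_one]
    · exact hρ
    · filter_upwards [hMnn] with ω hω using Real.rpow_nonneg hω p
    · filter_upwards [hMnn] with ω hω
      rw [Real.enorm_eq_ofReal hω, ENNReal.ofReal_rpow_of_nonneg hω hp0.le]
  have hQ : ∫⁻ ω, ‖Q 0 ω‖ₑ ^ p ∂μ ≠ ∞ := by
    refine ne_of_eq_of_ne (lintegral_congr fun ω => ?_) hQint.hasFiniteIntegral.ne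
    rw [Real.enorm_eq_ofReal_abs, Real.enorm_eq_ofReal (by positivity),
      ENNReal.ofReal_rpow_of_nonneg (abs_nonneg _) hp0.le]
  have hsum := hindep.ae_summable_norm_mul_prod hX hident hp0 hp1 hM hQ
  have hY : Yinf = perpetuity ∘ fun ω n => X n ω := funext hYinf
  have hY1 : Y1inf = perpetuity ∘ fun ω n => X (n + 1) ω := by
    funext ω
    refine (hY1inf ω).trans (tsum_congr fun n => ?_)
    rw [range_eq_Ico]
    exact congrArg _ (prod_Ico_add' (M · ω) 0 n 1).symm
  refine ⟨?_, ?_, ?_, ?_⟩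
  · filter_upwards [hsum, hMpos] with ω hω hpos
    simpa [X, abs_prod, abs_of_pos (hpos _)] using hω
  · filter_upwards [hsum] with ω hω
    rw [hY, hY1]
    exact perpetuity_eq_add_mul_perpetuity_shift hω.of_norm
  · rw [hY1]
    exact (hindep.indepFun_shift hX).comp measurable_perpetuity measurable_id
  · rw [hY, hY1, ← Measure.map_map measurable_perpetuity (measurable_pi_lambda _ fun n => hX _),
      ← Measure.map_map measurable_perpetuity (measurable_pi_lambda _ hX),
      hindep.map_shift_eq hX hident]
end

section
/- Let (M_1,Q_1) be a random vector with M_1>0 almost surely, and let Y_∞ and Y_{1,∞} be random variables such that Y_∞ = Q_1 + M_1·Y_{1,∞}, Y_{1,∞} is independent of (M_1,Q_1), and Y_{1,∞} has the same law as Y_∞. If both Q_1 and Q_1/M_1 are unbounded from above (i.e. P(Q_1>u)>0 and P(Q_1/M_1>u)>0 for every u∈ℝ), then Y_∞ is unbounded from above, i.e. P(Y_∞>u)>0 for every u∈ℝ. -/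
open MeasureTheory ProbabilityTheory

/-!
Pick `a` with `P(Y∞ > a) > 0`; such an `a` exists on any probability space. On the event
`{Y_{1,∞} > a, Q₁/M₁ > -a}`, which has positive probability by independence and equality of laws,
`Y∞ = M₁ (Q₁/M₁ + Y_{1,∞}) > 0`. Repeating the argument with the event `{Y_{1,∞} > 0, Q₁ > u}`
gives `Y∞ > u` with positive probability.
-/

theorem exists_measure_lt_pos {Ω : Type*} [MeasurableSpace Ω] (μ : Measure Ω) [NeZero μ]
    (X : Ω → ℝ) : ∃ a : ℝ, 0 < μ {ω | a < X ω} := by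
  by_contra! h
  have hcover : (⋃ n : ℕ, {ω | -(n : ℝ) < X ω}) = Set.univ :=
    Set.iUnion_eq_univ_iff.2 fun ω => (exists_nat_gt (-X ω)).imp fun _ hn => neg_lt.1 hn
  apply NeZero.ne μ
  rw [← Measure.measure_univ_eq_zero, ← hcover]
  exact measure_iUnion_null fun n => nonpos_iff_eq_zero.1 (h _)

theorem ProbabilityTheory.IndepFun.measure_pos_of_ae_imp {Ω α β : Type*} [MeasurableSpace Ω]
    [MeasurableSpace α] [MeasurableSpace β] {μ : Measure Ω} {X : Ω → α} {Z : Ω → β} (h : IndepFun X Z μ)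
    {A : Set α} {B : Set β} (hA : MeasurableSet A) (hB : MeasurableSet B)
    (hXA : 0 < μ (X ⁻¹' A)) (hZB : 0 < μ (Z ⁻¹' B)) {S : Set Ω}
    (hS : ∀ᵐ ω ∂μ, X ω ∈ A → Z ω ∈ B → ω ∈ S) : 0 < μ S :=
  calc 0 < μ (X ⁻¹' A) * μ (Z ⁻¹' B) := ENNReal.mul_pos hXA.ne' hZB.ne'
    _ = μ (X ⁻¹' A ∩ Z ⁻¹' B) := (h.measure_inter_preimage_eq_mul _ _ hA hB).symm
    _ ≤ μ S := measure_mono_ae (hS.mono fun _ himp hω => himp hω.1 hω.2)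

section AffineFixedPoint

variable {Ω : Type*} [MeasurableSpace Ω] {μ : Measure Ω} {M Q Yinf Y1inf : Ω → ℝ}

theorem measure_gt_pos_of_affine_fixedPoint
    (hYmeas : Measurable Yinf) (hY1meas : Measurable Y1inf)
    (hMpos : ∀ᵐ ω ∂μ, 0 < M ω)
    (hY : ∀ ω, Yinf ω = Q ω + M ω * Y1inf ω)
    (hindep : IndepFun Y1inf (fun ω => (M ω, Q ω)) μ)
    (hlaw : Measure.map Y1inf μ = Measure.map Yinf μ)
    {a b : ℝ} (ha : 0 < μ {ω | Yinf ω > a})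
    {T : Set (ℝ × ℝ)} (hT : MeasurableSet T) (hMQ : 0 < μ ((fun ω => (M ω, Q ω)) ⁻¹' T))
    (hab : ∀ m q y : ℝ, 0 < m → a < y → (m, q) ∈ T → b < q + m * y) :
    0 < μ {ω | Yinf ω > b} := by
  have hY1a : μ (Y1inf ⁻¹' Set.Ioi a) = μ {ω | Yinf ω > a} := by
    rw [← Measure.map_apply hY1meas measurableSet_Ioi, hlaw,
      Measure.map_apply hYmeas measurableSet_Ioi]
    rfl
  refine hindep.measure_pos_of_ae_imp measurableSet_Ioi hT (hY1a ▸ ha) hMQ ?_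
  filter_upwards [hMpos] with ω hM hy hmq
  show b < Yinf ω
  rw [hY]
  exact hab _ _ _ hM hy hmq

end AffineFixedPoint

theorem fixed_point_unbounded_above_general
    {Ω : Type*} [MeasurableSpace Ω] (μ : Measure Ω) [IsProbabilityMeasure μ]
    (M Q Yinf Y1inf : Ω → ℝ)
    (hYmeas : Measurable Yinf) (hY1meas : Measurable Y1inf)
    (hMpos : ∀ᵐ ω ∂μ, 0 < M ω)
    (hY : ∀ ω, Yinf ω = Q ω + M ω * Y1inf ω)
    (hindep : IndepFun Y1inf (fun ω => (M ω, Q ω)) μ)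
    (hlaw : Measure.map Y1inf μ = Measure.map Yinf μ)
    (hQunbdd : ∀ u : ℝ, 0 < μ {ω | Q ω > u})
    (hQMunbdd : ∀ u : ℝ, 0 < μ {ω | Q ω / M ω > u}) :
    ∀ u : ℝ, 0 < μ {ω | Yinf ω > u} := by
  intro u
  obtain ⟨a, ha⟩ := exists_measure_lt_pos μ Yinf
  have hpos : 0 < μ {ω | Yinf ω > 0} :=
    measure_gt_pos_of_affine_fixedPoint hYmeas hY1meas hMpos hY hindep hlaw ha
      ((measurable_snd.div measurable_fst) measurableSet_Ioi) (hQMunbdd (-a))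
      fun m q y hm hy hqm => by
        have hq : -a * m < q := (lt_div_iff₀ hm).1 hqm
        nlinarith [mul_lt_mul_of_pos_left hy hm]
  exact measure_gt_pos_of_affine_fixedPoint hYmeas hY1meas hMpos hY hindep hlaw hpos
    (measurable_snd measurableSet_Ioi) (hQunbdd u)
    fun m q y hm hy hq => by linarith [mul_pos hm hy, show u < q from hq]

/-- Let `Y∞ = Q + M * Y1∞` pathwise, where `M > 0` a.s., `Y1∞` is independent of `(M, Q)`
and has the same law as `Y∞`. If `Q` and `Q/M` are both unbounded from above, then `Y∞` is
unbounded from above. -/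
theorem fixed_point_unbounded_above
    {Ω : Type*} [MeasurableSpace Ω] (μ : Measure Ω) [IsProbabilityMeasure μ]
    (M Q Yinf Y1inf : Ω → ℝ)
    (hMmeas : Measurable M) (hQmeas : Measurable Q)
    (hYmeas : Measurable Yinf) (hY1meas : Measurable Y1inf)
    (hMpos : ∀ᵐ ω ∂μ, 0 < M ω)
    (hY : ∀ ω, Yinf ω = Q ω + M ω * Y1inf ω)
    (hindep : IndepFun Y1inf (fun ω => (M ω, Q ω)) μ)
    (hlaw : Measure.map Y1inf μ = Measure.map Yinf μ)
    (hQunbdd : ∀ u : ℝ, 0 < μ {ω | Q ω > u})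
    (hQMunbdd : ∀ u : ℝ, 0 < μ {ω | Q ω / M ω > u}) :
    ∀ u : ℝ, 0 < μ {ω | Yinf ω > u} :=
  fixed_point_unbounded_above_general μ M Q Yinf Y1inf hYmeas hY1meas hMpos hY hindep hlaw hQunbdd
    hQMunbdd
end
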